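/- Suppose t ≥ 1 satisfies [S]ᵗ(1_{T^{≤t}}·w_t) > 0 and μᵗ(T^{≤t}) = 1. Then for every prefix-closed function f with branches (L_j)_{j≥0}, the trace semantics satisfies ⟦S⟧f = [S]ᵗ(f_t·w_t) / [S]ᵗw_t. -/

import Mathlib

open MeasureTheory ProbabilityTheory Filter Set
open scoped ENNReal

namespace PaperPPG

variable {Ω : Type*} [MeasurableSpace Ω]

/-- Concatenation of a finite word with an infinite sequence. -/
def cat {j : ℕ} (u : Fin j → Ω) (ω : ℕ → Ω) : ℕ → Ω :=
  fun n => if h : n < j then u ⟨n, h⟩ else ω (n - j)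

/-- Extension of a finite word by the constant `star`. -/
def extendW (star : Ω) {j : ℕ} (u : Fin j → Ω) : ℕ → Ω :=
  fun n => if h : n < j then u ⟨n, h⟩ else star

/-- First `t` letters of an infinite sequence. -/
def take (t : ℕ) (ω : ℕ → Ω) : Fin t → Ω := fun i => ω i

/-- Cylinder generated by a set of words of length `j`. -/
def cyl {j : ℕ} (B : Set (Fin j → Ω)) : Set (ℕ → Ω) := {ω | take j ω ∈ B}

/-- `u` is a prefix of `v`. -/
def IsPref {i j : ℕ} (u : Fin i → Ω) (v : Fin j → Ω) : Prop :=
  ∃ h : i ≤ j, ∀ k : Fin i, u k = v (Fin.castLE h k)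

/-- A sequence of languages, `L j ⊆ Ω^j`, is prefix-free. -/
def PrefixFree (L : (j : ℕ) → Set (Fin j → Ω)) : Prop :=
  ∀ i j : ℕ, i ≠ j → ∀ u ∈ L i, ∀ v ∈ L j, ¬ IsPref u v

/-- `L^{≤ t+1}`: words of length `t+1` having a prefix in some `L j` (necessarily `j ≤ t+1`). -/
def Lle (L : (j : ℕ) → Set (Fin j → Ω)) (t : ℕ) : Set (Fin (t + 1) → Ω) :=
  {v | ∃ j : ℕ, ∃ u ∈ L j, IsPref u v}

/-- `L^{> t+1}`: words of length `t+1` that are prefixes of members of some `L j` with `j > t+1`. -/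
def Lgt (L : (j : ℕ) → Set (Fin j → Ω)) (t : ℕ) : Set (Fin (t + 1) → Ω) :=
  {u | ∃ j : ℕ, t + 1 < j ∧ ∃ v ∈ L j, IsPref u v}

/-- `T_{n+1}`: words of length `n+1` whose letters are outside `T` except the last one, in `T`. -/
def Tword (T : Set Ω) (n : ℕ) : Set (Fin (n + 1) → Ω) :=
  {u | (∀ i : Fin (n + 1), (i : ℕ) < n → u i ∉ T) ∧ u (Fin.last n) ∈ T}

/-- `T^{≤ t+1}`: words of length `t+1` with some letter in `T`. -/
def Tle (T : Set Ω) (t : ℕ) : Set (Fin (t + 1) → Ω) := {u | ∃ i, u i ∈ T}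

/-- Infinite sequences that terminate (enter `T`) in finite time. -/
def Tf (T : Set Ω) : Set (ℕ → Ω) := {ω | ∃ j, ω j ∈ T}

/-- T-respectfulness of a sequence of languages. -/
def TRespectful (T : Set Ω) (L : (j : ℕ) → Set (Fin j → Ω)) : Prop :=
  ∀ n : ℕ, Lgt L n ∩ Tword T n = ∅

/-- Truncated weight of a word of length `t+1`. -/
noncomputable def wt (sc : Ω → ℝ≥0∞) (t : ℕ) (u : Fin (t + 1) → Ω) : ℝ≥0∞ :=
  ∏ i, sc (u i)

/-- Weight of an infinite sequence: the limit (infimum) of the nonincreasing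
sequence of partial products of the scores. -/
noncomputable def w (sc : Ω → ℝ≥0∞) (ω : ℕ → Ω) : ℝ≥0∞ :=
  ⨅ t : ℕ, ∏ i : Fin (t + 1), sc (ω i)

/-- Finite approximation `f_t` of a function on infinite sequences. -/
noncomputable def ft (star : Ω) (t : ℕ) (f : (ℕ → Ω) → ℝ≥0∞) (u : Fin (t + 1) → Ω) : ℝ≥0∞ :=
  f (extendW star u)

/-- A prefix-closed function with branches `L`. -/
structure IsPrefixClosed (T : Set Ω) (f : (ℕ → Ω) → ℝ≥0∞)
    (L : (j : ℕ) → Set (Fin j → Ω)) : Prop where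
  measF : Measurable f
  measL : ∀ j, MeasurableSet (L j)
  pf : PrefixFree L
  supp : Function.support f = ⋃ j, cyl (L j)
  const : ∀ j : ℕ, ∀ u ∈ L j, ∀ ω ω' : ℕ → Ω, f (cat u ω) = f (cat u ω')
  resp : TRespectful T L

/-- Sequences that, from the first moment (if any) they enter `T`, remain in `T` forever. -/
def Theta (T : Set Ω) : Set (ℕ → Ω) :=
  {ω | ∀ n, ω n ∉ T} ∪ ⋃ j : ℕ, {ω | (∀ n, n < j → ω n ∉ T) ∧ ∀ n, j ≤ n → ω n ∈ T}

/-- Finite version of `Theta`, on words of length `n+1`. -/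
def ThetaW (T : Set Ω) (n : ℕ) : Set (Fin (n + 1) → Ω) :=
  {u | ∀ i, u i ∉ T} ∪
    ⋃ j : ℕ, {u | j ≤ n ∧ (∀ i : Fin (n + 1), (i : ℕ) < j → u i ∉ T) ∧
      ∀ i : Fin (n + 1), j ≤ (i : ℕ) → u i ∈ T}

/-- The lifting of `h : Ω → ℝ≥0∞` (supported on `T`) to infinite sequences. -/
noncomputable def lift (T : Set Ω) (h : Ω → ℝ≥0∞) (ω : ℕ → Ω) : ℝ≥0∞ :=
  ∑' n : ℕ, (cyl (Tword T n)).indicator 1 ω * h (ω n)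

/-- The branches of the lifting of `h`: `L 0 = ∅` and `L j = (Ω∖T)^{j-1}·(T ∩ supp h)`. -/
def liftBranch (T : Set Ω) (h : Ω → ℝ≥0∞) : (j : ℕ) → Set (Fin j → Ω)
  | 0 => ∅
  | n + 1 => {u | (∀ i : Fin (n + 1), (i : ℕ) < n → u i ∉ T) ∧
      u (Fin.last n) ∈ T ∩ Function.support h}

/-- The filtering distribution at time `t+1` induced by a measure on words of
length `t+1` and the weight `wt sc t` as global potential. -/
noncomputable def filt (sc : Ω → ℝ≥0∞) (t : ℕ) (μ : Measure (Fin (t + 1) → Ω)) : Measure Ω :=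
  (∫⁻ u, wt sc t u ∂μ)⁻¹ • Measure.map (fun u => u (Fin.last t)) (μ.withDensity (wt sc t))

/-- The data of a Markov chain: an initial law `μ1`, a Markov transition kernel `κ`,
the laws `μF n` of the first `n+1` states, and the law `μI` on infinite
trajectories, uniquely determined by the Ionescu-Tulcea theorem through the
cylinder condition `proj`. -/
structure MarkovSetting (Ω : Type*) [MeasurableSpace Ω] where
  μ1 : Measure Ω
  prob1 : IsProbabilityMeasure μ1
  κ : Kernel Ω Ω
  markov : IsMarkovKernel κ
  μF : (n : ℕ) → Measure (Fin (n + 1) → Ω)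
  μI : Measure (ℕ → Ω)
  probI : IsProbabilityMeasure μI
  base : μF 0 = Measure.map (fun x => fun _ : Fin 1 => x) μ1
  step : ∀ n : ℕ, μF (n + 1) =
    Measure.map (fun p : (Fin (n + 1) → Ω) × Ω => Fin.snoc p.1 p.2)
      ((μF n) ⊗ₘ (κ.comap (fun v => v (Fin.last n)) (measurable_pi_apply _)))
  proj : ∀ n : ℕ, Measure.map (take (n + 1)) μI = μF n

section AuxLemmas

lemma measurable_take' (t : ℕ) : Measurable (take t : (ℕ → Ω) → Fin t → Ω) :=
  measurable_pi_lambda _ fun _ => measurable_pi_apply _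

lemma measurable_extendW (star : Ω) (j : ℕ) :
    Measurable (extendW star : (Fin j → Ω) → ℕ → Ω) := by
  apply measurable_pi_lambda
  intro n
  unfold extendW
  by_cases h : n < j
  · simpa [h] using measurable_pi_apply (⟨n, h⟩ : Fin j)
  · simpa [h] using measurable_const

lemma measurable_wt {sc : Ω → ℝ≥0∞} (hsc : Measurable sc) (t : ℕ) :
    Measurable (wt sc t) := by
  unfold wt
  exact Finset.measurable_prod _ fun i _ => hsc.comp (measurable_pi_apply i)

lemma measurable_snocfun (n : ℕ) :
    Measurable (fun p : (Fin (n + 1) → Ω) × Ω => (Fin.snoc p.1 p.2 : Fin (n + 2) → Ω)) := by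
  apply measurable_pi_lambda
  intro i
  induction i using Fin.lastCases with
  | last => simpa [Fin.snoc_last] using measurable_snd
  | cast j => simp [Fin.snoc_castSucc]; exact (measurable_pi_apply j).comp measurable_fst

lemma f_eq_ft {T : Set Ω} {f : (ℕ → Ω) → ℝ≥0∞} {L : (j : ℕ) → Set (Fin j → Ω)}
    (hf : IsPrefixClosed T f L) (star : Ω) (t : ℕ) (ω : ℕ → Ω)
    (hω : take (t + 1) ω ∈ Tle T t) :
    f ω = ft star t f (take (t + 1) ω) := by
  classical
  obtain ⟨i, hi⟩ := hω
  have hit : (i : ℕ) < t + 1 := i.isLt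
  have hex : ∃ n, ω n ∈ T := ⟨(i : ℕ), hi⟩
  set k := Nat.find hex with hk
  have hkt : k ≤ t := by
    have := Nat.find_min' hex hi
    omega
  have hTword : take (k + 1) ω ∈ Tword T k := by
    constructor
    · intro j hj
      exact Nat.find_min hex hj
    · exact Nat.find_spec hex
  have key : ∀ j, t + 1 < j → ∀ v ∈ L j, ¬ IsPref (take (k + 1) ω) v := by
    intro j hj v hv hpref
    have hmem : take (k + 1) ω ∈ Lgt L k ∩ Tword T k :=
      ⟨⟨j, by omega, v, hv, hpref⟩, hTword⟩
    rw [hf.resp k] at hmem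
    exact hmem
  have agree : ∀ n, n < t + 1 → extendW star (take (t + 1) ω) n = ω n := by
    intro n hn
    simp [extendW, take, hn]
  have chain : ∀ j, j ≤ t + 1 → take j ω ∈ L j →
      f ω = f (extendW star (take (t + 1) ω)) := by
    intro j hj hu
    have h1 : cat (take j ω) (fun n => ω (n + j)) = ω := by
      funext n
      by_cases h : n < j
      · simp [cat, h, take]
      · simp only [cat, dif_neg h]
        congr 1
        omega
    have h2 : cat (take j ω) (fun n => extendW star (take (t + 1) ω) (n + j)) =
        extendW star (take (t + 1) ω) := by
      funext n
      by_cases h : n < j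
      · simp only [cat, dif_pos h]
        exact (agree n (by omega)).symm
      · simp only [cat, dif_neg h]
        congr 1
        omega
    calc f ω = f (cat (take j ω) (fun n => ω (n + j))) := by rw [h1]
    _ = f (cat (take j ω) (fun n => extendW star (take (t + 1) ω) (n + j))) :=
        hf.const j _ hu _ _
    _ = f (extendW star (take (t + 1) ω)) := by rw [h2]
  show f ω = f (extendW star (take (t + 1) ω))
  rcases eq_or_ne (f ω) 0 with h0 | h0
  · rcases eq_or_ne (f (extendW star (take (t + 1) ω))) 0 with h1 | h1
    · rw [h0, h1]
    · have hsupp : extendW star (take (t + 1) ω) ∈ Function.support f := h1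
      rw [hf.supp, mem_iUnion] at hsupp
      obtain ⟨j, hj⟩ := hsupp
      have hj' : take j (extendW star (take (t + 1) ω)) ∈ L j := hj
      rcases le_or_gt j (t + 1) with hle | hgt
      · have heq : take j (extendW star (take (t + 1) ω)) = take j ω := by
          funext x
          exact agree x (by omega)
        rw [heq] at hj'
        exact chain j hle hj'
      · exact absurd
          (⟨by omega, fun x => (agree x (by omega)).symm⟩ :
            IsPref (take (k + 1) ω) (take j (extendW star (take (t + 1) ω))))
          (key j hgt _ hj')
  · have hsupp : ω ∈ Function.support f := h0
    rw [hf.supp, mem_iUnion] at hsupp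
    obtain ⟨j, hj⟩ := hsupp
    have hj' : take j ω ∈ L j := hj
    rcases le_or_gt j (t + 1) with hle | hgt
    · exact chain j hle hj'
    · exact absurd
        (⟨by omega, fun x => rfl⟩ : IsPref (take (k + 1) ω) (take j ω))
        (key j hgt _ hj')

lemma w_eq_wt {sc : Ω → ℝ≥0∞} (hsc1 : ∀ x, sc x ≤ 1) {T : Set Ω}
    (hscT : ∀ x ∈ T, sc x = 1) (t : ℕ) (ω : ℕ → Ω)
    (hterm : take (t + 1) ω ∈ Tle T t)
    (hclosed : ∀ n, ω n ∈ T → ω (n + 1) ∈ T) :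
    w sc ω = wt sc t (take (t + 1) ω) := by
  obtain ⟨i, hi⟩ := hterm
  have hit : (i : ℕ) < t + 1 := i.isLt
  have hmem : ∀ n, (i : ℕ) ≤ n → ω n ∈ T := by
    intro n hn
    induction n, hn using Nat.le_induction with
    | base => exact hi
    | succ n hn ih => exact hclosed n ih
  set P : ℕ → ℝ≥0∞ := fun n => ∏ j : Fin (n + 1), sc (ω j) with hP
  have hsucc : ∀ n, P (n + 1) = P n * sc (ω (n + 1)) := by
    intro n
    simp only [hP]
    rw [Fin.prod_univ_castSucc]
    simp
  have hanti : Antitone P := antitone_nat_of_succ_le fun n => by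
    rw [hsucc n]
    calc P n * sc (ω (n + 1)) ≤ P n * 1 := mul_le_mul_right (hsc1 _) _
    _ = P n := mul_one _
  have hstable : ∀ m, P (t + m) = P t := by
    intro m
    induction m with
    | zero => rfl
    | succ m ih =>
      rw [show t + (m + 1) = (t + m) + 1 from rfl, hsucc, hscT _ (hmem _ (by omega)),
        mul_one, ih]
  have hw : w sc ω = ⨅ n, P n := rfl
  have hwt : wt sc t (take (t + 1) ω) = P t := rfl
  rw [hw, hwt]
  refine le_antisymm (iInf_le _ t) (le_iInf fun n => ?_)
  rcases le_total n t with h | h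
  · exact hanti h
  · obtain ⟨m, rfl⟩ := Nat.exists_eq_add_of_le h
    exact (hstable m).ge

end AuxLemmas

/-- **Exact finite computation** in case all paths of length `t+1` have terminated. -/
theorem exact_finite_case
    (M : MarkovSetting Ω) (T : Set Ω) (hT : MeasurableSet T)
    (hκT : ∀ ω ∈ T, M.κ ω = Measure.dirac ω)
    (sc : Ω → ℝ≥0∞) (hsc : Measurable sc) (hsc1 : ∀ x, sc x ≤ 1)
    (hscT : ∀ ω ∈ T, sc ω = 1) (star : Ω) (t : ℕ)
    (Hpos : 0 < ∫⁻ u, (Tle T t).indicator 1 u * wt sc t u ∂(M.μF t))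
    (Hterm : M.μF t (Tle T t) = 1)
    (f : (ℕ → Ω) → ℝ≥0∞) (L : (j : ℕ) → Set (Fin j → Ω))
    (hf : IsPrefixClosed T f L) :
    (∫⁻ ω, f ω * w sc ω ∂M.μI) / (∫⁻ ω, w sc ω ∂M.μI) =
      (∫⁻ u, ft star t f u * wt sc t u ∂(M.μF t)) / (∫⁻ u, wt sc t u ∂(M.μF t)) := by
  classical
  haveI := M.probI
  haveI := M.markov
  have hprobF : ∀ n, IsProbabilityMeasure (M.μF n) := fun n => by
    rw [← M.proj n]
    exact Measure.isProbabilityMeasure_map (measurable_take' (n + 1)).aemeasurable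
  have hTle : MeasurableSet (Tle T t) := by
    have : Tle T t = ⋃ i : Fin (t + 1), (fun u : Fin (t + 1) → Ω => u i) ⁻¹' T := by
      ext u; simp [Tle]
    rw [this]
    exact MeasurableSet.iUnion fun i => (measurable_pi_apply i) hT
  -- the kernel almost never leaves T
  have hnull : ∀ n : ℕ, M.μI {ω | ω n ∈ T ∧ ω (n + 1) ∉ T} = 0 := by
    intro n
    haveI := hprobF n
    have hSm : MeasurableSet {u : Fin (n + 2) → Ω |
        u (Fin.castSucc (Fin.last n)) ∈ T ∧ u (Fin.last (n + 1)) ∉ T} := by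
      have hrw : {u : Fin (n + 2) → Ω |
          u (Fin.castSucc (Fin.last n)) ∈ T ∧ u (Fin.last (n + 1)) ∉ T} =
          ((fun u : Fin (n + 2) → Ω => u (Fin.castSucc (Fin.last n))) ⁻¹' T) ∩
            ((fun u : Fin (n + 2) → Ω => u (Fin.last (n + 1))) ⁻¹' Tᶜ) := rfl
      rw [hrw]
      exact ((measurable_pi_apply _) hT).inter ((measurable_pi_apply _) hT.compl)
    have hpre : {ω : ℕ → Ω | ω n ∈ T ∧ ω (n + 1) ∉ T} =
        take (n + 2) ⁻¹'
          {u | u (Fin.castSucc (Fin.last n)) ∈ T ∧ u (Fin.last (n + 1)) ∉ T} := by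
      ext ω
      simp [take, Fin.last]
    rw [hpre, ← Measure.map_apply (measurable_take' (n + 2)) hSm, M.proj (n + 1), M.step n,
      Measure.map_apply (measurable_snocfun n) hSm]
    have hpreS : (fun p : (Fin (n + 1) → Ω) × Ω => (Fin.snoc p.1 p.2 : Fin (n + 2) → Ω)) ⁻¹'
        {u | u (Fin.castSucc (Fin.last n)) ∈ T ∧ u (Fin.last (n + 1)) ∉ T} =
        {p : (Fin (n + 1) → Ω) × Ω | p.1 (Fin.last n) ∈ T ∧ p.2 ∉ T} := by
      ext p
      simp [Fin.snoc_castSucc, Fin.snoc_last]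
    have hmS : MeasurableSet {p : (Fin (n + 1) → Ω) × Ω |
        p.1 (Fin.last n) ∈ T ∧ p.2 ∉ T} := by
      have hrw : {p : (Fin (n + 1) → Ω) × Ω | p.1 (Fin.last n) ∈ T ∧ p.2 ∉ T} =
          ((fun p : (Fin (n + 1) → Ω) × Ω => p.1 (Fin.last n)) ⁻¹' T) ∩
            (Prod.snd ⁻¹' Tᶜ) := rfl
      rw [hrw]
      exact (((measurable_pi_apply _).comp measurable_fst) hT).inter
        (measurable_snd hT.compl)
    rw [hpreS, Measure.compProd_apply hmS]
    have hzero : ∀ v : Fin (n + 1) → Ω,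
        (M.κ.comap (fun v : Fin (n + 1) → Ω => v (Fin.last n)) (measurable_pi_apply _)) v
          (Prod.mk v ⁻¹' {p : (Fin (n + 1) → Ω) × Ω | p.1 (Fin.last n) ∈ T ∧ p.2 ∉ T})
          = 0 := by
      intro v
      rw [Kernel.comap_apply]
      by_cases hv : v (Fin.last n) ∈ T
      · have hset : Prod.mk v ⁻¹' {p : (Fin (n + 1) → Ω) × Ω |
            p.1 (Fin.last n) ∈ T ∧ p.2 ∉ T} = Tᶜ := by
          ext x; simp [hv]
        rw [hset, hκT _ hv, Measure.dirac_apply' _ hT.compl]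
        simp [hv]
      · have hset : Prod.mk v ⁻¹' {p : (Fin (n + 1) → Ω) × Ω |
            p.1 (Fin.last n) ∈ T ∧ p.2 ∉ T} = ∅ := by
          ext x; simp [hv]
        rw [hset]
        simp
    rw [lintegral_congr hzero]
    simp
  have hG1 : ∀ᵐ ω ∂M.μI, take (t + 1) ω ∈ Tle T t := by
    rw [ae_iff]
    have hset : {ω : ℕ → Ω | ¬ take (t + 1) ω ∈ Tle T t} =
        (take (t + 1) ⁻¹' Tle T t)ᶜ := rfl
    have h1 : M.μI (take (t + 1) ⁻¹' Tle T t) = 1 := by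
      rw [← Measure.map_apply (measurable_take' (t + 1)) hTle, M.proj t, Hterm]
    rw [hset, measure_compl ((measurable_take' (t + 1)) hTle) (measure_ne_top _ _), h1]
    simp
  have hG2 : ∀ᵐ ω ∂M.μI, ∀ n, ω n ∈ T → ω (n + 1) ∈ T := by
    rw [ae_all_iff]
    intro n
    rw [ae_iff]
    have hset : {ω : ℕ → Ω | ¬ (ω n ∈ T → ω (n + 1) ∈ T)} =
        {ω | ω n ∈ T ∧ ω (n + 1) ∉ T} := by
      ext ω; simp [Classical.not_imp]
    rw [hset]
    exact hnull n
  have hnum : ∫⁻ ω, f ω * w sc ω ∂M.μI =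
      ∫⁻ ω, ft star t f (take (t + 1) ω) * wt sc t (take (t + 1) ω) ∂M.μI := by
    apply lintegral_congr_ae
    filter_upwards [hG1, hG2] with ω h1 h2
    rw [f_eq_ft hf star t ω h1, w_eq_wt hsc1 hscT t ω h1 h2]
  have hden : ∫⁻ ω, w sc ω ∂M.μI = ∫⁻ ω, wt sc t (take (t + 1) ω) ∂M.μI := by
    apply lintegral_congr_ae
    filter_upwards [hG1, hG2] with ω h1 h2
    rw [w_eq_wt hsc1 hscT t ω h1 h2]
  have hft : Measurable (ft star t f) := hf.measF.comp (measurable_extendW star (t + 1))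
  have hwt : Measurable (wt sc t) := measurable_wt hsc t
  have e1 : ∫⁻ ω, ft star t f (take (t + 1) ω) * wt sc t (take (t + 1) ω) ∂M.μI =
      ∫⁻ u, ft star t f u * wt sc t u ∂(M.μF t) := by
    rw [← M.proj t]
    exact (lintegral_map (hft.mul hwt) (measurable_take' (t + 1))).symm
  have e2 : ∫⁻ ω, wt sc t (take (t + 1) ω) ∂M.μI = ∫⁻ u, wt sc t u ∂(M.μF t) := by
    rw [← M.proj t]
    exact (lintegral_map hwt (measurable_take' (t + 1))).symm
  rw [hnum, hden, e1, e2]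

end PaperPPG
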